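/- Let (ε_t)_{t≥1} be random variables and (ψ_t)_{t≥1} be a predictable sequence with ψ_t ∈ (0,1], and (A_t) arm indicators with P(A_t = k | F_{t-1}) = ψ_t where ε_t is independent of F_{t-1} and of A_t given F_{t-1}, with E[ε_t] = 0 and Var(ε_t) = 1. Then the adaptively weighted sum M_t = Σ_{s≤t} ψ_s^{-1/2} 1{A_s = k} ε_s is a martingale with respect to (F_t) and E[M_T²] = T for every T; in particular Var(T^{-1/2} M_T) = 1. -/

import Mathlib

/-!
Write `X_t = ψ_t^{-1/2} 1{A_t = k} ε_t`. The weight `ψ_t^{-1/2}` is predictable but unbounded, so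
it cannot be pulled out of `E[· | F_{t-1}]` directly; instead one pulls the bounded, nonvanishing
factor `√ψ_t` (resp. `ψ_t`) out of `E[√ψ_t X_t | F_{t-1}] = E[1{A_t = k} ε_t | F_{t-1}] = 0`
(resp. of `E[ψ_t X_t² | F_{t-1}] = ψ_t`) and cancels it. Hence `X` is a martingale difference
sequence with conditional variance `1`; its increments are orthogonal in `L²`, so
`E[M_T²] = ∑_{t ≤ T} E[X_t²] = T`.
-/

open MeasureTheory Finset

section MartingaleDifference

variable {Ω : Type*} {m m0 : MeasurableSpace Ω} {μ : Measure Ω} [IsFiniteMeasure μ]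

lemma condExp_ae_eq_of_condExp_mul_ae_eq_mul (hm : m ≤ m0) {w g h : Ω → ℝ}
    (hw : StronglyMeasurable[m] w) (hw0 : ∀ ω, w ω ≠ 0) {c : ℝ} (hwc : ∀ ω, ‖w ω‖ ≤ c)
    (hg : Integrable g μ) (hwg : μ[w * g | m] =ᵐ[μ] w * h) : μ[g | m] =ᵐ[μ] h := by
  filter_upwards [condExp_stronglyMeasurable_mul_of_bound hm hw hg c (ae_of_all _ hwc), hwg]
    with ω hpull hω
  exact mul_left_cancel₀ (hw0 ω) (hpull.symm.trans hω)

lemma integral_mul_eq_zero_of_condExp_eq_zero (hm : m ≤ m0) {f g : Ω → ℝ}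
    (hf : StronglyMeasurable[m] f) (hfg : Integrable (f * g) μ) (hg : Integrable g μ)
    (hg0 : μ[g | m] =ᵐ[μ] 0) : ∫ ω, f ω * g ω ∂μ = 0 :=
  calc ∫ ω, f ω * g ω ∂μ = ∫ ω, (μ[f * g | m]) ω ∂μ := (integral_condExp hm).symm
    _ = ∫ _, (0 : ℝ) ∂μ := integral_congr_ae <| by
        filter_upwards [condExp_mul_of_stronglyMeasurable_left hf hfg hg, hg0] with ω h1 h2
        simp [h1, h2]
    _ = 0 := integral_zero _ _

variable {ℱ : Filtration ℕ m0} {X : ℕ → Ω → ℝ}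

lemma stronglyAdapted_sum_range (hX : ∀ t, StronglyMeasurable[ℱ (t + 1)] (X t)) :
    StronglyAdapted ℱ (fun t ω => ∑ s ∈ range t, X s ω) := fun _ =>
  Finset.stronglyMeasurable_fun_sum _ fun s hs => (hX s).mono (ℱ.mono (mem_range.1 hs))

lemma martingale_sum_range (hX : ∀ t, StronglyMeasurable[ℱ (t + 1)] (X t))
    (hint : ∀ t, Integrable (X t) μ) (hX0 : ∀ t, μ[X t | ℱ t] =ᵐ[μ] 0) :
    Martingale (fun t ω => ∑ s ∈ range t, X s ω) ℱ μ := by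
  refine martingale_of_condExp_sub_eq_zero_nat (stronglyAdapted_sum_range hX)
    (fun t => integrable_finsetSum _ fun s _ => hint s) fun t => ?_
  have hdiff : (fun ω => ∑ s ∈ range (t + 1), X s ω) - (fun ω => ∑ s ∈ range t, X s ω) = X t := by
    funext ω
    simp [sum_range_succ]
  rw [hdiff]
  exact hX0 t

lemma integral_sq_sum_range (hX : ∀ t, StronglyMeasurable[ℱ (t + 1)] (X t))
    (hL2 : ∀ t, MemLp (X t) 2 μ) (hX0 : ∀ t, μ[X t | ℱ t] =ᵐ[μ] 0) (T : ℕ) :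
    ∫ ω, (∑ s ∈ range T, X s ω) ^ 2 ∂μ = ∑ s ∈ range T, ∫ ω, X s ω ^ 2 ∂μ := by
  induction T with
  | zero => simp
  | succ T ih =>
    have hsq : ∀ {f : Ω → ℝ}, MemLp f 2 μ → Integrable (fun ω => f ω ^ 2) μ :=
      fun hf => (memLp_two_iff_integrable_sq hf.aestronglyMeasurable).1 hf
    have hML2 : MemLp (fun ω => ∑ s ∈ range T, X s ω) 2 μ := memLp_finsetSum _ fun s _ => hL2 s
    have hMX : Integrable (fun ω => (∑ s ∈ range T, X s ω) * X T ω) μ :=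
      hML2.integrable_mul (hL2 T)
    have hcross : ∫ ω, (∑ s ∈ range T, X s ω) * X T ω ∂μ = 0 :=
      integral_mul_eq_zero_of_condExp_eq_zero (ℱ.le T) (stronglyAdapted_sum_range hX T) hMX
        ((hL2 T).integrable one_le_two) (hX0 T)
    have hexpand : ∀ ω, (∑ s ∈ range (T + 1), X s ω) ^ 2 = (∑ s ∈ range T, X s ω) ^ 2
        + 2 * ((∑ s ∈ range T, X s ω) * X T ω) + X T ω ^ 2 := fun ω => by
      rw [sum_range_succ]; ring
    rw [integral_congr_ae (ae_of_all _ hexpand),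
      integral_add ((hsq hML2).fun_add (hMX.const_mul 2)) (hsq (hL2 T)),
      integral_add (hsq hML2) (hMX.const_mul 2), integral_const_mul, hcross, ih, sum_range_succ]
    ring

end MartingaleDifference

lemma sq_inv_sqrt_mul_mul {p c e : ℝ} (hp : 0 ≤ p) (hc : c = 0 ∨ c = 1) :
    ((√p)⁻¹ * c * e) ^ 2 = p⁻¹ * c * e ^ 2 := by
  rcases hc with rfl | rfl <;> simp [mul_pow, inv_pow, Real.sq_sqrt hp]

section WeightedIncrement

variable {Ω : Type*} {m m0 : MeasurableSpace Ω} {μ : Measure Ω} [IsFiniteMeasure μ]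
  {p c e : Ω → ℝ}

lemma condExp_inv_sqrt_mul_eq_zero (hm : m ≤ m0) (hp : StronglyMeasurable[m] p)
    (hp_range : ∀ ω, p ω ∈ Set.Ioc 0 1) (hint : Integrable (fun ω => (√(p ω))⁻¹ * c ω * e ω) μ)
    (hmean : μ[fun ω => c ω * e ω | m] =ᵐ[μ] 0) :
    μ[fun ω => (√(p ω))⁻¹ * c ω * e ω | m] =ᵐ[μ] 0 := by
  have hcancel : (fun ω => √(p ω)) * (fun ω => (√(p ω))⁻¹ * c ω * e ω) = fun ω => c ω * e ω :=
    funext fun ω => by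
      simp [← mul_assoc, mul_inv_cancel₀ (Real.sqrt_pos.2 (hp_range ω).1).ne']
  refine condExp_ae_eq_of_condExp_mul_ae_eq_mul hm hp.measurable.sqrt.stronglyMeasurable
    (fun ω => (Real.sqrt_pos.2 (hp_range ω).1).ne') (c := 1) (fun ω => ?_) hint ?_
  · simpa [abs_of_nonneg (Real.sqrt_nonneg _)] using (hp_range ω).2
  · simpa [hcancel] using hmean

lemma condExp_sq_inv_sqrt_mul_eq_one (hm : m ≤ m0) (hp : StronglyMeasurable[m] p)
    (hp_range : ∀ ω, p ω ∈ Set.Ioc 0 1) (hc : ∀ ω, c ω = 0 ∨ c ω = 1)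
    (hint : Integrable (fun ω => (p ω)⁻¹ * c ω * e ω ^ 2) μ)
    (hvar : μ[fun ω => c ω * e ω ^ 2 | m] =ᵐ[μ] p) :
    μ[fun ω => ((√(p ω))⁻¹ * c ω * e ω) ^ 2 | m] =ᵐ[μ] 1 := by
  have hsq : (fun ω => ((√(p ω))⁻¹ * c ω * e ω) ^ 2) = fun ω => (p ω)⁻¹ * c ω * e ω ^ 2 :=
    funext fun ω => sq_inv_sqrt_mul_mul (hp_range ω).1.le (hc ω)
  have hcancel : p * (fun ω => (p ω)⁻¹ * c ω * e ω ^ 2) = fun ω => c ω * e ω ^ 2 :=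
    funext fun ω => by simp [← mul_assoc, mul_inv_cancel₀ (hp_range ω).1.ne']
  rw [hsq]
  refine condExp_ae_eq_of_condExp_mul_ae_eq_mul hm hp (fun ω => (hp_range ω).1.ne') (c := 1)
    (fun ω => ?_) hint ?_
  · simpa [abs_of_pos (hp_range ω).1] using (hp_range ω).2
  · simpa [hcancel] using hvar

end WeightedIncrement

theorem stmt7_general {Ω : Type*} {m0 : MeasurableSpace Ω} (μ : Measure Ω) [IsProbabilityMeasure μ]
    (ℱ : Filtration ℕ m0) (ψ χ ε : ℕ → Ω → ℝ)
    (hψ_pred : ∀ t, StronglyMeasurable[ℱ t] (ψ (t + 1)))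
    (hψ_range : ∀ t ω, ψ t ω ∈ Set.Ioc (0 : ℝ) 1)
    (hχ : ∀ t ω, χ t ω = 0 ∨ χ t ω = 1)
    (hadapt : ∀ t, StronglyMeasurable[ℱ (t + 1)]
      (fun ω => (Real.sqrt (ψ (t + 1) ω))⁻¹ * χ (t + 1) ω * ε (t + 1) ω))
    (hInt : ∀ t, Integrable
      (fun ω => (Real.sqrt (ψ (t + 1) ω))⁻¹ * χ (t + 1) ω * ε (t + 1) ω) μ)
    (hInt2 : ∀ t, Integrable
      (fun ω => (ψ (t + 1) ω)⁻¹ * χ (t + 1) ω * (ε (t + 1) ω) ^ 2) μ)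
    (hmean : ∀ t, μ[fun ω => χ (t + 1) ω * ε (t + 1) ω | ℱ t] =ᵐ[μ] fun _ => 0)
    (hvar : ∀ t, μ[fun ω => χ (t + 1) ω * (ε (t + 1) ω) ^ 2 | ℱ t]
      =ᵐ[μ] fun ω => ψ (t + 1) ω) :
    Martingale (fun t ω => ∑ s ∈ range t,
        (Real.sqrt (ψ (s + 1) ω))⁻¹ * χ (s + 1) ω * ε (s + 1) ω) ℱ μ ∧
    (∀ T : ℕ, ∫ ω, (∑ s ∈ range T,
        (Real.sqrt (ψ (s + 1) ω))⁻¹ * χ (s + 1) ω * ε (s + 1) ω) ^ 2 ∂μ = T) ∧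
    (∀ T : ℕ, 1 ≤ T → ∫ ω, ((Real.sqrt T)⁻¹ * ∑ s ∈ range T,
        (Real.sqrt (ψ (s + 1) ω))⁻¹ * χ (s + 1) ω * ε (s + 1) ω) ^ 2 ∂μ = 1) := by
  set X : ℕ → Ω → ℝ := fun t ω => (√(ψ (t + 1) ω))⁻¹ * χ (t + 1) ω * ε (t + 1) ω
  have hX0 : ∀ t, μ[X t | ℱ t] =ᵐ[μ] 0 := fun t =>
    condExp_inv_sqrt_mul_eq_zero (ℱ.le t) (hψ_pred t) (hψ_range _) (hInt t) (hmean t)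
  have hXsq : ∀ t, ∫ ω, X t ω ^ 2 ∂μ = 1 := fun t => by
    rw [← integral_condExp (ℱ.le t), integral_congr_ae (condExp_sq_inv_sqrt_mul_eq_one (ℱ.le t)
      (hψ_pred t) (hψ_range _) (hχ _) (hInt2 t) (hvar t))]
    simp
  have hL2 : ∀ t, MemLp (X t) 2 μ := fun t =>
    (memLp_two_iff_integrable_sq ((hadapt t).mono (ℱ.le _)).aestronglyMeasurable).2 <|
      (hInt2 t).congr <| ae_of_all _ fun ω =>
        (sq_inv_sqrt_mul_mul (hψ_range _ ω).1.le (hχ _ ω)).symm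
  have hsecond : ∀ T : ℕ, ∫ ω, (∑ s ∈ range T, X s ω) ^ 2 ∂μ = T := fun T => by
    rw [integral_sq_sum_range hadapt hL2 hX0, sum_congr rfl fun s _ => hXsq s, sum_const,
      card_range, nsmul_one]
  refine ⟨martingale_sum_range hadapt hInt hX0, hsecond, fun T hT => ?_⟩
  have hT : (0 : ℝ) < T := by exact_mod_cast hT
  simp_rw [mul_pow, inv_pow, Real.sq_sqrt hT.le]
  rw [integral_const_mul, hsecond, inv_mul_cancel₀ hT.ne']

/-- The adaptively weighted sum `M_t = Σ_{s≤t} ψ_s^{-1/2} 1{A_s = k} ε_s`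
is a martingale with `E[M_T²] = T`; in particular `Var(T^{-1/2} M_T) = 1`.
The indicator `1{A_s = k}` is the 0/1-valued process `χ`, `ψ` is the predictable
sampling probability, and the conditional-moment hypotheses encode
`P(A_t = k | F_{t-1}) = ψ_t`, `E[ε_t] = 0`, `Var(ε_t) = 1` and the independence of
`ε_t` from the past and from `A_t`. -/
theorem stmt7 {Ω : Type*} {m0 : MeasurableSpace Ω} (μ : Measure Ω) [IsProbabilityMeasure μ]
    (ℱ : Filtration ℕ m0) (ψ χ ε : ℕ → Ω → ℝ)
    (hψ_pred : ∀ t, StronglyMeasurable[ℱ t] (ψ (t + 1)))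
    (hψ_range : ∀ t ω, ψ t ω ∈ Set.Ioc (0 : ℝ) 1)
    (hχ : ∀ t ω, χ t ω = 0 ∨ χ t ω = 1)
    (hadapt : ∀ t, StronglyMeasurable[ℱ (t + 1)]
      (fun ω => (Real.sqrt (ψ (t + 1) ω))⁻¹ * χ (t + 1) ω * ε (t + 1) ω))
    (hInt : ∀ t, Integrable
      (fun ω => (Real.sqrt (ψ (t + 1) ω))⁻¹ * χ (t + 1) ω * ε (t + 1) ω) μ)
    (hInt2 : ∀ t, Integrable
      (fun ω => (ψ (t + 1) ω)⁻¹ * χ (t + 1) ω * (ε (t + 1) ω) ^ 2) μ)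
    (hprob : ∀ t, μ[χ (t + 1) | ℱ t] =ᵐ[μ] fun ω => ψ (t + 1) ω)
    (hmean : ∀ t, μ[fun ω => χ (t + 1) ω * ε (t + 1) ω | ℱ t] =ᵐ[μ] fun _ => 0)
    (hvar : ∀ t, μ[fun ω => χ (t + 1) ω * (ε (t + 1) ω) ^ 2 | ℱ t]
      =ᵐ[μ] fun ω => ψ (t + 1) ω) :
    Martingale (fun t ω => ∑ s ∈ range t,
        (Real.sqrt (ψ (s + 1) ω))⁻¹ * χ (s + 1) ω * ε (s + 1) ω) ℱ μ ∧
    (∀ T : ℕ, ∫ ω, (∑ s ∈ range T,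
        (Real.sqrt (ψ (s + 1) ω))⁻¹ * χ (s + 1) ω * ε (s + 1) ω) ^ 2 ∂μ = T) ∧
    (∀ T : ℕ, 1 ≤ T → ∫ ω, ((Real.sqrt T)⁻¹ * ∑ s ∈ range T,
        (Real.sqrt (ψ (s + 1) ω))⁻¹ * χ (s + 1) ω * ε (s + 1) ω) ^ 2 ∂μ = 1) :=
  stmt7_general μ ℱ ψ χ ε hψ_pred hψ_range hχ hadapt hInt hInt2 hmean hvar
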